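/- arXiv:1304.1204 — 4 statements merged into one kernel-verified Lean document; each statement's English description precedes it below -/
import Mathlib

section
/- (Atkinson's factorization, coefficientwise form.) Let A be a Rota–Baxter algebra of weight θ with Rota–Baxter operator R, set R̃ := −θ·id_A − R, and fix x ∈ A. Define sequences (f_n) and (h_n) in A by f_0 = 1, f_{n+1} = R(f_n·x) and h_0 = 1, h_{n+1} = R̃(x·h_n). Then for every n ≥ 1, ∑_{i+j=n} f_i·h_j = −θ·∑_{i+j=n−1} f_i·x·h_j; equivalently, the solutions f = 1 + λR(f x) and h = 1 + λR̃(x h) in A[[λ]] satisfy f·h = 1 − λθ·f x h, i.e. 1 + λθx = f^{−1}h^{−1}. -/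
/-!
Expanding `f_{i+1} h_{j+1} = R(f_i x) R̃(x h_j)` with the identity
`R(a) R̃(b) = R(a R̃(b)) + R̃(R(a) b)` splits every coefficient of `f h` in degree `n + 1` into
an `R`-part and an `R̃`-part; summed over `i + j = n + 1` these are `R` and `R̃` applied to the
degree-`n` coefficient `∑ f_i x h_j` of `f x h`, and `R + R̃ = -θ·id`.
-/

open Finset

def IsRotaBaxter {k A : Type*} [CommSemiring k] [Semiring A] [Algebra k A]
    (θ : k) (R : A →ₗ[k] A) : Prop :=
  ∀ x y : A, R x * R y = R (R x * y + x * R y + θ • (x * y))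

theorem IsRotaBaxter.apply_mul_apply_tilde {k A : Type*} [CommSemiring k] [Ring A]
    [Algebra k A] {θ : k} {R : A →ₗ[k] A} (hR : IsRotaBaxter θ R)
    {Rt : A →ₗ[k] A} (hRt : ∀ x : A, Rt x = -(θ • x) - R x) (a b : A) :
    R a * Rt b = R (a * Rt b) + Rt (R a * b) := by
  have hRb : R b = -(θ • b) - Rt b := by rw [hRt]; abel
  rw [hRt, hRt (R a * b), mul_sub, mul_neg, mul_smul_comm, hR, hRb]
  simp only [mul_sub, mul_neg, mul_smul_comm, map_add, map_sub, map_neg, map_smul]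
  abel

theorem Finset.Nat.sum_antidiagonal_succ_mul_eq {A F : Type*} [Semiring A] [FunLike F A A]
    [AddMonoidHomClass F A A] (P Q : F) (x : A) (f h : ℕ → A)
    (hf : ∀ i, f (i + 1) * h 0 = P (f i * x * h 0))
    (hh : ∀ j, f 0 * h (j + 1) = Q (f 0 * x * h j))
    (hfh : ∀ i j, f (i + 1) * h (j + 1) = P (f i * x * h (j + 1)) + Q (f (i + 1) * x * h j))
    (n : ℕ) :
    ∑ ij ∈ antidiagonal (n + 1), f ij.1 * h ij.2 =
      P (∑ ij ∈ antidiagonal n, f ij.1 * x * h ij.2) +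
        Q (∑ ij ∈ antidiagonal n, f ij.1 * x * h ij.2) := by
  cases n with
  | zero =>
    rw [Nat.sum_antidiagonal_succ]
    simp [hf, hh, add_comm]
  | succ n =>
    rw [Nat.sum_antidiagonal_succ, Nat.sum_antidiagonal_succ', map_sum, map_sum,
      Nat.sum_antidiagonal_succ' (f := fun ij => P (f ij.1 * x * h ij.2)),
      Nat.sum_antidiagonal_succ (f := fun ij => Q (f ij.1 * x * h ij.2))]
    simp only [hf, hh, hfh, sum_add_distrib]
    abel

theorem atkinson_factorization_general {k A : Type*} [Field k] [Ring A] [Algebra k A]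
    (θ : k) (R : A →ₗ[k] A)
    (hRB : ∀ x y : A, R x * R y = R (R x * y + x * R y + θ • (x * y)))
    (Rt : A →ₗ[k] A) (hRt : ∀ x : A, Rt x = -(θ • x) - R x)
    (x : A) (f h : ℕ → A)
    (hf0 : f 0 = 1) (hfS : ∀ n : ℕ, f (n + 1) = R (f n * x))
    (hh0 : h 0 = 1) (hhS : ∀ n : ℕ, h (n + 1) = Rt (x * h n)) :
    ∀ n : ℕ, 1 ≤ n →
      ∑ ij ∈ Finset.HasAntidiagonal.antidiagonal n, f ij.1 * h ij.2 =
        -(θ • ∑ ij ∈ Finset.HasAntidiagonal.antidiagonal (n - 1), f ij.1 * x * h ij.2) := by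
  have hfh : ∀ i j,
      f (i + 1) * h (j + 1) = R (f i * x * h (j + 1)) + Rt (f (i + 1) * x * h j) := by
    intro i j
    rw [hfS, hhS, IsRotaBaxter.apply_mul_apply_tilde hRB hRt, ← hhS, ← hfS]
    simp only [mul_assoc]
  intro n hn
  obtain ⟨n, rfl⟩ : ∃ m, n = m + 1 := ⟨n - 1, by omega⟩
  rw [Nat.add_sub_cancel, Finset.Nat.sum_antidiagonal_succ_mul_eq R Rt x f h
    (by simp [hfS, hh0]) (by simp [hhS, hf0]) hfh, hRt]
  abel

/-- Atkinson's factorization, coefficientwise form.  Let `R` be a Rota–Baxter operator of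
weight `θ`, `R̃ := -θ·id - R`, and `x ∈ A`.  If `f₀ = 1`, `f_{n+1} = R(f_n x)` and
`h₀ = 1`, `h_{n+1} = R̃(x h_n)`, then for every `n ≥ 1`,
`∑_{i+j=n} f_i h_j = -θ ∑_{i+j=n-1} f_i x h_j`
(i.e. the series `f = 1 + λR(fx)`, `h = 1 + λR̃(xh)` satisfy `f h = 1 - λθ f x h`,
equivalently `1 + λθx = f⁻¹ h⁻¹`). -/
theorem atkinson_factorization {k A : Type*} [Field k] [CharZero k] [Ring A] [Algebra k A]
    (θ : k) (R : A →ₗ[k] A)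
    (hRB : ∀ x y : A, R x * R y = R (R x * y + x * R y + θ • (x * y)))
    (Rt : A →ₗ[k] A) (hRt : ∀ x : A, Rt x = -(θ • x) - R x)
    (x : A) (f h : ℕ → A)
    (hf0 : f 0 = 1) (hfS : ∀ n : ℕ, f (n + 1) = R (f n * x))
    (hh0 : h 0 = 1) (hhS : ∀ n : ℕ, h (n + 1) = Rt (x * h n)) :
    ∀ n : ℕ, 1 ≤ n →
      ∑ ij ∈ Finset.HasAntidiagonal.antidiagonal n, f ij.1 * h ij.2 =
        -(θ • ∑ ij ∈ Finset.HasAntidiagonal.antidiagonal (n - 1), f ij.1 * x * h ij.2) :=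
  atkinson_factorization_general θ R hRB Rt hRt x f h hf0 hfS hh0 hhS
end

section
/- Let A be a Rota–Baxter algebra of weight θ with Rota–Baxter operator R. Then the product a ▷_θ b := R(a)b − bR(a) − θ·ba is left pre-Lie, i.e. (a ▷_θ b) ▷_θ c − a ▷_θ (b ▷_θ c) = (b ▷_θ a) ▷_θ c − b ▷_θ (a ▷_θ c) for all a, b, c ∈ A, and its commutator bracket coincides with that of the double product: a ▷_θ b − b ▷_θ a = a *_θ b − b *_θ a for all a, b ∈ A. -/
/-!
Write `L_x c := x ▷_θ c = ⁅R x, c⁆ - θ • c x`. For any linear `R` one computes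
`⁅L_a, L_b⁆ c = ⁅⁅R a, R b⁆, c⁆ - θ • c (a *_θ b - b *_θ a)`, and `a ▷_θ b - b ▷_θ a = a *_θ b - b *_θ a`.
The Rota–Baxter relation says `R (a *_θ b) = R a * R b`, so `R` maps this common commutator
to `⁅R a, R b⁆`; hence `L_{a ▷ b - b ▷ a} = ⁅L_a, L_b⁆`, which is the left pre-Lie identity.
-/

/-- The double product of weight `θ`: `x *_θ y := R(x)y + xR(y) + θ·xy`. -/
def doubleProd {k A : Type*} [Field k] [Ring A] [Algebra k A]
    (θ : k) (R : A →ₗ[k] A) (x y : A) : A :=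
  R x * y + x * R y + θ • (x * y)

/-- The pre-Lie product of weight `θ`: `a ▷_θ b := R(a)b - bR(a) - θ·ba`. -/
def preLieProd {k A : Type*} [Field k] [Ring A] [Algebra k A]
    (θ : k) (R : A →ₗ[k] A) (a b : A) : A :=
  R a * b - b * R a - θ • (b * a)

section

variable {k A : Type*} [Field k] [Ring A] [Algebra k A] (θ : k) (R : A →ₗ[k] A)

theorem preLieProd_sub_left (x y c : A) :
    preLieProd θ R (x - y) c = preLieProd θ R x c - preLieProd θ R y c := by
  simp only [preLieProd, map_sub, sub_mul, mul_sub, smul_sub]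
  abel

theorem preLieProd_sub_preLieProd (a b : A) :
    preLieProd θ R a b - preLieProd θ R b a = doubleProd θ R a b - doubleProd θ R b a := by
  simp only [preLieProd, doubleProd]
  module

theorem preLieProd_preLieProd_sub_preLieProd_preLieProd (a b c : A) :
    preLieProd θ R a (preLieProd θ R b c) - preLieProd θ R b (preLieProd θ R a c) =
      ⁅⁅R a, R b⁆, c⁆ - θ • (c * (doubleProd θ R a b - doubleProd θ R b a)) := by
  simp only [preLieProd, doubleProd, Ring.lie_def, sub_mul, mul_sub, mul_add,
    smul_sub, smul_add, smul_mul_assoc, mul_smul_comm, smul_smul, ← mul_assoc]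
  module

theorem map_doubleProd_sub_doubleProd
    (hRB : ∀ x y : A, R x * R y = R (R x * y + x * R y + θ • (x * y))) (a b : A) :
    R (doubleProd θ R a b - doubleProd θ R b a) = ⁅R a, R b⁆ := by
  rw [map_sub, Ring.lie_def, doubleProd, doubleProd, ← hRB, ← hRB]

end

theorem rotaBaxter_preLie_general {k A : Type*} [Field k] [Ring A] [Algebra k A]
    (θ : k) (R : A →ₗ[k] A)
    (hRB : ∀ x y : A, R x * R y = R (R x * y + x * R y + θ • (x * y))) :
    (∀ a b c : A,
      preLieProd θ R (preLieProd θ R a b) c - preLieProd θ R a (preLieProd θ R b c) =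
        preLieProd θ R (preLieProd θ R b a) c - preLieProd θ R b (preLieProd θ R a c)) ∧
    (∀ a b : A,
      preLieProd θ R a b - preLieProd θ R b a = doubleProd θ R a b - doubleProd θ R b a) := by
  refine ⟨fun a b c => ?_, preLieProd_sub_preLieProd θ R⟩
  rw [sub_eq_sub_iff_sub_eq_sub, ← preLieProd_sub_left, preLieProd_sub_preLieProd,
    preLieProd_preLieProd_sub_preLieProd_preLieProd, preLieProd,
    map_doubleProd_sub_doubleProd θ R hRB, ← Ring.lie_def]

/-- In a Rota–Baxter algebra of weight `θ`, the product `a ▷_θ b := R(a)b - bR(a) - θ·ba`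
is left pre-Lie, and its commutator bracket coincides with that of the double product. -/
theorem rotaBaxter_preLie {k A : Type*} [Field k] [CharZero k] [Ring A] [Algebra k A]
    (θ : k) (R : A →ₗ[k] A)
    (hRB : ∀ x y : A, R x * R y = R (R x * y + x * R y + θ • (x * y))) :
    (∀ a b c : A,
      preLieProd θ R (preLieProd θ R a b) c - preLieProd θ R a (preLieProd θ R b c) =
        preLieProd θ R (preLieProd θ R b a) c - preLieProd θ R b (preLieProd θ R a c)) ∧
    (∀ a b : A,
      preLieProd θ R a b - preLieProd θ R b a = doubleProd θ R a b - doubleProd θ R b a) :=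
  rotaBaxter_preLie_general θ R hRB
end

section
/- (Weight zero commutative Bohnenblust–Spitzer identity.) Let A be a commutative Rota–Baxter algebra of weight zero with Rota–Baxter operator R, let n ≥ 1 and F₁, …, F_n ∈ A. For a permutation σ of {1,…,n} define G_σ by G¹_σ := F_{σ(1)} and G^{k+1}_σ := R(G^k_σ)·F_{σ(k+1)}. Then ∑_{σ ∈ S_n} G^n_σ = F₁ *₀ F₂ *₀ ⋯ *₀ F_n, where *₀ is the (associative, commutative) weight-zero double product a *₀ b := R(a)b + aR(b). -/
/-!
Write `S(F)` for the sum over all orderings of the iterated products `R(⋯R(F_{σ 1})⋯)F_{σ n}`.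
Grouping the permutations by their last value `p` gives `S(F) = ∑ₚ R(S(F without p)) F_p`.
The Rota–Baxter identity says exactly that `R(a *₀ b) = R(a) R(b)`, so by induction
`R(S(F without p)) = ∏_{i ≠ p} R(F_i)`, while the same identity turns the recursion
`F₁ *₀ ⋯ *₀ F_{n+1} = R(F₁ *₀ ⋯ *₀ F_n) F_{n+1} + (F₁ *₀ ⋯ *₀ F_n) R(F_{n+1})` into the
closed form `F₁ *₀ ⋯ *₀ F_n = ∑ₚ (∏_{i ≠ p} R(F_i)) F_p`.
-/

open Finset Equiv

namespace Fin

/-- `foldl1 f G = f (⋯ (f (G 0) (G 1)) ⋯) (G n)`. -/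
def foldl1 {α : Type*} (f : α → α → α) {n : ℕ} (G : Fin (n + 1) → α) : α :=
  (List.ofFn G).tail.foldl f (G 0)

@[simp]
theorem foldl1_zero {α : Type*} (f : α → α → α) (G : Fin 1 → α) : foldl1 f G = G 0 := rfl

theorem foldl1_succ {α : Type*} (f : α → α → α) {n : ℕ} (G : Fin (n + 2) → α) :
    foldl1 f G = f (foldl1 f (init G)) (G (last _)) := by
  rw [foldl1, foldl1, List.ofFn_succ (f := G), List.ofFn_succ (f := init G), List.tail_cons,
    List.tail_cons, List.ofFn_succ', List.concat_eq_append, List.foldl_concat]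
  simp only [init, succ_castSucc, castSucc_zero, succ_last]

def permSnoc {n : ℕ} (p : Fin (n + 1)) (τ : Perm (Fin n)) : Perm (Fin (n + 1)) :=
  p.cycleRange.symm * Perm.decomposeFin.symm (0, τ) * finRotate (n + 1)

@[simp]
theorem permSnoc_last {n : ℕ} (p : Fin (n + 1)) (τ : Perm (Fin n)) :
    permSnoc p τ (last n) = p := by
  simp [permSnoc]

@[simp]
theorem permSnoc_castSucc {n : ℕ} (p : Fin (n + 1)) (τ : Perm (Fin n)) (j : Fin n) :
    permSnoc p τ (castSucc j) = p.succAbove (τ j) := by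
  simp [permSnoc, coeSucc_eq_succ]

theorem sum_perm_eq_sum_sum_permSnoc {M : Type*} [AddCommMonoid M] {n : ℕ}
    (f : Perm (Fin (n + 1)) → M) : ∑ σ, f σ = ∑ p, ∑ τ, f (permSnoc p τ) := by
  have hinj : Function.Injective fun x : Fin (n + 1) × Perm (Fin n) => permSnoc x.1 x.2 := by
    rintro ⟨p, τ⟩ ⟨q, υ⟩ h
    obtain rfl : p = q := by simpa using congr($h (last n))
    refine Prod.ext rfl (Equiv.ext fun j => ?_)
    simpa using congr($h (castSucc j))
  have hbij := (Fintype.bijective_iff_injective_and_card _).2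
    ⟨hinj, by simp [Fintype.card_perm, Nat.factorial_succ]⟩
  rw [← Fintype.sum_prod_type']
  exact (Fintype.sum_bijective _ hbij _ _ fun _ => rfl).symm

theorem foldl1_comp_permSnoc {α : Type*} (f : α → α → α) {n : ℕ} (G : Fin (n + 2) → α)
    (p : Fin (n + 2)) (τ : Perm (Fin (n + 1))) :
    foldl1 f (G ∘ permSnoc p τ) = f (foldl1 f (p.removeNth G ∘ τ)) (G p) := by
  have hinit : init (G ∘ permSnoc p τ) = p.removeNth G ∘ τ :=
    funext fun j => by simp [init, removeNth]
  rw [foldl1_succ, hinit, Function.comp_apply, permSnoc_last]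

end Fin

section RotaBaxter

variable {A : Type*} [CommSemiring A]

theorem map_foldl1_doubleProduct (R : A → A) (hRB : ∀ x y, R x * R y = R (R x * y + x * R y)) :
    ∀ {n : ℕ} (G : Fin (n + 1) → A),
      R (Fin.foldl1 (fun a b => R a * b + a * R b) G) = ∏ i, R (G i)
  | 0, G => by simp
  | n + 1, G => by
    rw [Fin.foldl1_succ, ← hRB, map_foldl1_doubleProduct R hRB,
      Fin.prod_univ_castSucc (n := n + 1)]
    rfl

theorem foldl1_doubleProduct_eq_sum (R : A → A)
    (hRB : ∀ x y, R x * R y = R (R x * y + x * R y)) :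
    ∀ {n : ℕ} (G : Fin (n + 1) → A),
      Fin.foldl1 (fun a b => R a * b + a * R b) G = ∑ p, (∏ i, R (G (p.succAbove i))) * G p
  | 0, G => by simp
  | n + 1, G => by
    rw [Fin.sum_univ_castSucc (n := n + 1), Fin.foldl1_succ, map_foldl1_doubleProduct R hRB,
      foldl1_doubleProduct_eq_sum R hRB, Finset.sum_mul, add_comm]
    simp only [Fin.init, Fin.succAbove_last, Fin.prod_univ_castSucc,
      Fin.castSucc_succAbove_castSucc, Fin.succAbove_ne_last_last (Fin.castSucc_ne_last _)]
    exact congrArg₂ _ (sum_congr rfl fun q _ => by ring) rfl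

theorem sum_perm_foldl1_chain_eq_foldl1_doubleProduct {F : Type*} [FunLike F A A]
    [AddMonoidHomClass F A A] (R : F) (hRB : ∀ x y, R x * R y = R (R x * y + x * R y))
    (n : ℕ) (G : Fin (n + 1) → A) :
    ∑ σ : Perm (Fin (n + 1)), Fin.foldl1 (fun a b => R a * b) (G ∘ σ) =
      Fin.foldl1 (fun a b => R a * b + a * R b) G := by
  induction n with
  | zero => simp [Subsingleton.elim _ (0 : Fin 1)]
  | succ n ih => calc
      _ = ∑ p, ∑ τ, Fin.foldl1 (fun a b => R a * b) (G ∘ Fin.permSnoc p τ) :=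
        Fin.sum_perm_eq_sum_sum_permSnoc fun σ => Fin.foldl1 (fun a b => R a * b) (G ∘ σ)
      _ = ∑ p, R (∑ τ : Perm (Fin (n + 1)),
            Fin.foldl1 (fun a b => R a * b) (p.removeNth G ∘ τ)) * G p := by
        simp only [Fin.foldl1_comp_permSnoc, ← sum_mul, ← map_sum]
      _ = ∑ p, (∏ i, R (G (p.succAbove i))) * G p := by
        simp only [ih, map_foldl1_doubleProduct R hRB, Fin.removeNth_apply]
      _ = _ := (foldl1_doubleProduct_eq_sum R hRB G).symm

end RotaBaxter

theorem bohnenblustSpitzer_weight_zero_general {k A : Type*} [Field k]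
    [CommRing A] [Algebra k A] (R : A →ₗ[k] A)
    (hRB : ∀ x y : A, R x * R y = R (R x * y + x * R y))
    (n : ℕ) (F : Fin (n + 1) → A) :
    ∑ σ : Equiv.Perm (Fin (n + 1)),
        (List.ofFn fun i => F (σ i)).tail.foldl (fun acc y => R acc * y) (F (σ 0)) =
      (List.ofFn F).tail.foldl (fun acc y => R acc * y + acc * R y) (F 0) :=
  sum_perm_foldl1_chain_eq_foldl1_doubleProduct R hRB n F

/-- Weight zero commutative Bohnenblust–Spitzer identity.  In a commutative Rota–Baxter
algebra of weight zero, for `F₁, …, F_{n+1}`,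
`∑_{σ ∈ S_{n+1}} R(⋯R(R(F_{σ(1)})F_{σ(2)})⋯)F_{σ(n+1)} = F₁ *₀ ⋯ *₀ F_{n+1}`,
where `a *₀ b := R(a)b + aR(b)` is the weight-zero double product. -/
theorem bohnenblustSpitzer_weight_zero {k A : Type*} [Field k] [CharZero k]
    [CommRing A] [Algebra k A] (R : A →ₗ[k] A)
    (hRB : ∀ x y : A, R x * R y = R (R x * y + x * R y))
    (n : ℕ) (F : Fin (n + 1) → A) :
    ∑ σ : Equiv.Perm (Fin (n + 1)),
        (List.ofFn fun i => F (σ i)).tail.foldl (fun acc y => R acc * y) (F (σ 0)) =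
      (List.ofFn F).tail.foldl (fun acc y => R acc * y + acc * R y) (F 0) :=
  bohnenblustSpitzer_weight_zero_general R hRB n F
end

section
/- (Semenov-Tian-Shansky.) Let L be a Lie algebra over a field k of characteristic zero and R : L → L a k-linear map satisfying the operator form of the classical Yang–Baxter equation [R(x), R(y)] = R([R(x), y] + [x, R(y)]) for all x, y ∈ L. Then the bracket [x, y]_R := [R(x), y] + [x, R(y)] is a Lie bracket on L: it is bilinear, alternating, and satisfies the Jacobi identity. -/
/-!
Applying `R` to `[x, y]_R` gives `[R x, R y]` by the Yang–Baxter equation, so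
`[[x, y]_R, z]_R = [[R x, R y], z] + [[R x, y], R z] + [[x, R y], R z]`. The nine terms of the
cyclic sum over `x, y, z` regroup into three cyclic sums `[[a, b], c] + [[b, c], a] + [[c, a], b]`,
each of which vanishes by the Jacobi identity of `L`.
-/

theorem lie_lie_add_lie_lie_add_lie_lie {L : Type*} [LieRing L] (a b c : L) :
    ⁅⁅a, b⁆, c⁆ + ⁅⁅b, c⁆, a⁆ + ⁅⁅c, a⁆, b⁆ = 0 := by
  rw [← lie_skew ⁅a, b⁆ c, ← lie_skew ⁅b, c⁆ a, ← lie_skew ⁅c, a⁆ b, ← neg_add, ← neg_add,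
    neg_eq_zero, lie_jacobi c a b]

namespace LinearMap

variable {k L : Type*} [CommRing k] [LieRing L] [LieAlgebra k L]

def rBracket (R : L →ₗ[k] L) (x y : L) : L :=
  ⁅R x, y⁆ + ⁅x, R y⁆

variable (R : L →ₗ[k] L)

theorem rBracket_add_left (x y z : L) :
    R.rBracket (x + y) z = R.rBracket x z + R.rBracket y z := by
  simp only [rBracket, map_add, add_lie]
  abel

theorem rBracket_smul_left (c : k) (x y : L) : R.rBracket (c • x) y = c • R.rBracket x y := by
  simp only [rBracket, map_smul, smul_lie, smul_add]

theorem rBracket_add_right (x y z : L) :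
    R.rBracket x (y + z) = R.rBracket x y + R.rBracket x z := by
  simp only [rBracket, map_add, lie_add]
  abel

theorem rBracket_smul_right (c : k) (x y : L) : R.rBracket x (c • y) = c • R.rBracket x y := by
  simp only [rBracket, map_smul, lie_smul, smul_add]

theorem rBracket_self (x : L) : R.rBracket x x = 0 := by
  rw [rBracket, ← lie_skew x (R x), add_neg_cancel]

variable {R}

theorem rBracket_rBracket_left (hR : ∀ x y : L, ⁅R x, R y⁆ = R (R.rBracket x y)) (x y z : L) :
    R.rBracket (R.rBracket x y) z = ⁅⁅R x, R y⁆, z⁆ + ⁅⁅R x, y⁆, R z⁆ + ⁅⁅x, R y⁆, R z⁆ := by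
  rw [rBracket, ← hR, rBracket, add_lie, add_assoc]

theorem rBracket_jacobi (hR : ∀ x y : L, ⁅R x, R y⁆ = R (R.rBracket x y)) (x y z : L) :
    R.rBracket (R.rBracket x y) z + R.rBracket (R.rBracket y z) x
      + R.rBracket (R.rBracket z x) y = 0 := by
  simp only [rBracket_rBracket_left hR]
  calc _ = (⁅⁅R x, R y⁆, z⁆ + ⁅⁅R y, z⁆, R x⁆ + ⁅⁅z, R x⁆, R y⁆)
          + (⁅⁅R x, y⁆, R z⁆ + ⁅⁅y, R z⁆, R x⁆ + ⁅⁅R z, R x⁆, y⁆)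
          + (⁅⁅x, R y⁆, R z⁆ + ⁅⁅R y, R z⁆, x⁆ + ⁅⁅R z, x⁆, R y⁆) := by abel
    _ = 0 := by simp only [lie_lie_add_lie_lie_add_lie_lie, add_zero]

end LinearMap

theorem sts_double_lie_bracket_general {k L : Type*} [Field k]
    [LieRing L] [LieAlgebra k L] (R : L →ₗ[k] L)
    (hCYBE : ∀ x y : L, ⁅R x, R y⁆ = R (⁅R x, y⁆ + ⁅x, R y⁆)) :
    (∀ x y z : L, ⁅R (x + y), z⁆ + ⁅x + y, R z⁆ =
        (⁅R x, z⁆ + ⁅x, R z⁆) + (⁅R y, z⁆ + ⁅y, R z⁆)) ∧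
    (∀ (c : k) (x y : L), ⁅R (c • x), y⁆ + ⁅c • x, R y⁆ = c • (⁅R x, y⁆ + ⁅x, R y⁆)) ∧
    (∀ x y z : L, ⁅R x, y + z⁆ + ⁅x, R (y + z)⁆ =
        (⁅R x, y⁆ + ⁅x, R y⁆) + (⁅R x, z⁆ + ⁅x, R z⁆)) ∧
    (∀ (c : k) (x y : L), ⁅R x, c • y⁆ + ⁅x, R (c • y)⁆ = c • (⁅R x, y⁆ + ⁅x, R y⁆)) ∧
    (∀ x : L, ⁅R x, x⁆ + ⁅x, R x⁆ = 0) ∧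
    (∀ x y z : L,
      (⁅R (⁅R x, y⁆ + ⁅x, R y⁆), z⁆ + ⁅⁅R x, y⁆ + ⁅x, R y⁆, R z⁆)
        + (⁅R (⁅R y, z⁆ + ⁅y, R z⁆), x⁆ + ⁅⁅R y, z⁆ + ⁅y, R z⁆, R x⁆)
        + (⁅R (⁅R z, x⁆ + ⁅z, R x⁆), y⁆ + ⁅⁅R z, x⁆ + ⁅z, R x⁆, R y⁆) = 0) :=
  ⟨R.rBracket_add_left, R.rBracket_smul_left, R.rBracket_add_right, R.rBracket_smul_right,
    R.rBracket_self, LinearMap.rBracket_jacobi hCYBE⟩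

/-- (Semenov-Tian-Shansky.)  If `R : L → L` is a linear map on a Lie algebra satisfying
the operator form of the classical Yang–Baxter equation
`[R(x), R(y)] = R([R(x), y] + [x, R(y)])`, then
`[x, y]_R := [R(x), y] + [x, R(y)]` is a Lie bracket on `L`: it is bilinear,
alternating, and satisfies the Jacobi identity. -/
theorem sts_double_lie_bracket {k L : Type*} [Field k] [CharZero k]
    [LieRing L] [LieAlgebra k L] (R : L →ₗ[k] L)
    (hCYBE : ∀ x y : L, ⁅R x, R y⁆ = R (⁅R x, y⁆ + ⁅x, R y⁆)) :
    (∀ x y z : L, ⁅R (x + y), z⁆ + ⁅x + y, R z⁆ =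
        (⁅R x, z⁆ + ⁅x, R z⁆) + (⁅R y, z⁆ + ⁅y, R z⁆)) ∧
    (∀ (c : k) (x y : L), ⁅R (c • x), y⁆ + ⁅c • x, R y⁆ = c • (⁅R x, y⁆ + ⁅x, R y⁆)) ∧
    (∀ x y z : L, ⁅R x, y + z⁆ + ⁅x, R (y + z)⁆ =
        (⁅R x, y⁆ + ⁅x, R y⁆) + (⁅R x, z⁆ + ⁅x, R z⁆)) ∧
    (∀ (c : k) (x y : L), ⁅R x, c • y⁆ + ⁅x, R (c • y)⁆ = c • (⁅R x, y⁆ + ⁅x, R y⁆)) ∧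
    (∀ x : L, ⁅R x, x⁆ + ⁅x, R x⁆ = 0) ∧
    (∀ x y z : L,
      (⁅R (⁅R x, y⁆ + ⁅x, R y⁆), z⁆ + ⁅⁅R x, y⁆ + ⁅x, R y⁆, R z⁆)
        + (⁅R (⁅R y, z⁆ + ⁅y, R z⁆), x⁆ + ⁅⁅R y, z⁆ + ⁅y, R z⁆, R x⁆)
        + (⁅R (⁅R z, x⁆ + ⁅z, R x⁆), y⁆ + ⁅⁅R z, x⁆ + ⁅z, R x⁆, R y⁆) = 0) :=
  sts_double_lie_bracket_general R hCYBE
end
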